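/- arXiv:2104.02861 — 2 statements merged into one kernel-verified Lean document; each statement's English description precedes it below -/
import Mathlib

section
/- Let 𝒜 : ℝ^{d×d} → ℝ^m be linear, ω ∈ ℝ^m with ‖ω‖₂ ≤ δ, X⋆ ∈ ℝ^{d×d} with rank(X⋆) ≤ r, y = 𝒜(X⋆) + ω, and μ > 0. Suppose the iterates satisfy rank(X_t) < 2r, rank(X_{t+1}) < 2r, and ‖X_t − X⋆‖_F ≤ Δ_t, where X_{t+1} = argmin_X { λ_t μ ‖X‖_* + ½‖X − (X_t − μ 𝒜ᵀ(𝒜(X_t) − y))‖_F² } with λ_t = (ξ_r δ + ρ_{r,3r} Δ_t/μ)/√r. Then ‖X_{t+1} − X⋆‖_F ≤ 2 ρ_{3r,3r} Δ_t + 2 ξ_{3r} μ δ. -/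
open MeasureTheory ProbabilityTheory

noncomputable section

def l2norm {n : ℕ} (x : Fin n → ℝ) : ℝ := Real.sqrt (∑ i, x i ^ 2)

/-- Frobenius (trace) inner product. -/
def fip {d : ℕ} (X Y : Matrix (Fin d) (Fin d) ℝ) : ℝ := ∑ i, ∑ j, X i j * Y i j

/-- Frobenius norm. -/
def frob {d : ℕ} (X : Matrix (Fin d) (Fin d) ℝ) : ℝ := Real.sqrt (∑ i, ∑ j, X i j ^ 2)

/-- Nuclear norm: sum of the singular values (square roots of eigenvalues of `XᴴX`). -/
def nucNorm {d : ℕ} (X : Matrix (Fin d) (Fin d) ℝ) : ℝ :=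
  ∑ i, Real.sqrt ((Matrix.isHermitian_conjTranspose_mul_self X).eigenvalues i)

/-- Frobenius-norm unit sphere of `d × d` matrices. -/
def frobSphere (d : ℕ) : Set (Matrix (Fin d) (Fin d) ℝ) := {X | frob X = 1}

/-- Matrices of rank at most `r`. -/
def lowRank (d r : ℕ) : Set (Matrix (Fin d) (Fin d) ℝ) := {X | X.rank ≤ r}

/-- Measurement map `𝒜(X)_i = ⟨A_i, X⟩_F` determined by its rows `A i`. -/
def opA {m d : ℕ} (A : Fin m → Matrix (Fin d) (Fin d) ℝ) (X : Matrix (Fin d) (Fin d) ℝ) :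
    Fin m → ℝ := fun i => fip (A i) X

/-- Adjoint `𝒜ᵀ(y) = ∑ i, y_i A_i`. -/
def opAT {m d : ℕ} (A : Fin m → Matrix (Fin d) (Fin d) ℝ) (y : Fin m → ℝ) :
    Matrix (Fin d) (Fin d) ℝ := ∑ i, y i • A i

/-- Restricted singular value `ρ(P,Q) = sup_{V∈P,U∈Q} ⟨V, (I - μ 𝒜ᵀ𝒜)(U)⟩`. -/
def rsRhoM {m d : ℕ} (A : Fin m → Matrix (Fin d) (Fin d) ℝ) (μ : ℝ)
    (P Q : Set (Matrix (Fin d) (Fin d) ℝ)) : ℝ :=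
  sSup {t | ∃ V ∈ P, ∃ U ∈ Q, t = fip V (U - μ • opAT A (opA A U))}

/-- Restricted singular value `ξ(P) = sup_{V∈P} ⟨V, 𝒜ᵀ(w/‖w‖₂)⟩`. -/
def rsXiM {m d : ℕ} (A : Fin m → Matrix (Fin d) (Fin d) ℝ) (w : Fin m → ℝ)
    (P : Set (Matrix (Fin d) (Fin d) ℝ)) : ℝ :=
  sSup {t | ∃ V ∈ P, t = fip V (opAT A ((l2norm w)⁻¹ • w))}

/-- Gaussian complexity of a set of matrices. -/
def gcompM {d : ℕ} (C : Set (Matrix (Fin d) (Fin d) ℝ)) : ℝ :=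
  ∫ g : Fin d → Fin d → ℝ, sSup ((fun X => |fip (Matrix.of g) X|) '' C)
    ∂(Measure.pi fun _ : Fin d => Measure.pi fun _ : Fin d => gaussianReal 0 1)

def psi2 {Ω : Type*} [MeasureSpace Ω] (Z : Ω → ℝ) : ℝ :=
  sInf {t | 0 < t ∧ ∫ ω, Real.exp (Z ω ^ 2 / t ^ 2) ≤ 2}

/-- ψ₂-norm of a random matrix, viewed as a random vector in `ℝ^{d²}`. -/
def mpsi2 {Ω : Type*} [MeasureSpace Ω] {d : ℕ} (X : Ω → Matrix (Fin d) (Fin d) ℝ) : ℝ :=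
  sSup {t | ∃ U ∈ frobSphere d, t = psi2 (fun ω => fip (X ω) U)}

/-- A random matrix is centered and isotropic (as a random vector in `ℝ^{d²}`). -/
def centIsoM {Ω : Type*} [MeasureSpace Ω] {d : ℕ} (X : Ω → Matrix (Fin d) (Fin d) ℝ) : Prop :=
  (∀ p q, ∫ ω, X ω p q = 0) ∧
    ∀ p q p' q', ∫ ω, X ω p q * X ω p' q' = if p = p' ∧ q = q' then (1 : ℝ) else 0

end

/-!
With `E = X_{t+1} - X⋆` and `G = X_t - μ 𝒜ᵀ(𝒜 X_t - y)`, split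
`‖E‖² = ⟨E, X_{t+1} - G⟩ + ⟨E, G - X⋆⟩`.
First-order optimality of the proximal step bounds the first term by
`λ μ (‖X⋆‖_* - ‖X_{t+1}‖_*)`. Pairing with the polar factor `W = U Vᵀ` of `X⋆`, which satisfies
`⟨W, X⋆⟩ = ‖X⋆‖_*`, `⟨W, ·⟩ ≤ ‖·‖_*` and `‖W‖_F² = rank X⋆ ≤ r`, turns this into
`λ μ √r ‖E‖ = (ξ_r μ δ + ρ_{r,3r} Δ) ‖E‖`.
Since `G - X⋆ = (I - μ 𝒜ᵀ𝒜)(X_t - X⋆) + μ 𝒜ᵀ ω` and both `E` and `X_t - X⋆` have rank at most `3r`,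
the second term is at most `(ρ_{3r,3r} Δ + ξ_{3r} μ δ) ‖E‖`. Divide by `‖E‖` and use that `ρ` and
`ξ` grow with the rank.
-/

lemma Real.sSup_nonneg_of_forall_neg_mem {S : Set ℝ} (hS : ∀ t ∈ S, -t ∈ S) : 0 ≤ sSup S := by
  by_cases hb : BddAbove S
  · rcases S.eq_empty_or_nonempty with rfl | ⟨t, ht⟩
    · simp
    · linarith [le_csSup hb ht, le_csSup hb (hS t ht)]
  · exact (Real.sSup_of_not_bddAbove hb).ge

lemma Real.sSup_le_sSup_of_subset {S T : Set ℝ} (hT : BddAbove T) (hT0 : 0 ≤ sSup T)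
    (hST : S ⊆ T) : sSup S ≤ sSup T := by
  rcases S.eq_empty_or_nonempty with rfl | hS
  · simpa using hT0
  · exact csSup_le_csSup hT hS hST

theorem inner_sub_le_of_forall_prox_le {F : Type*} [NormedAddCommGroup F] [InnerProductSpace ℝ F]
    {f : F → ℝ} (hf : ConvexOn ℝ Set.univ f) {x g : F}
    (hmin : ∀ z, f x + 1 / 2 * ‖x - g‖ ^ 2 ≤ f z + 1 / 2 * ‖z - g‖ ^ 2) (z : F) :
    inner ℝ (x - g) (x - z) ≤ f z - f x := by
  set a := f z - f x - inner ℝ (x - g) (x - z)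
  -- test minimality against `(1 - t) • x + t • z`, divide by `t` and let `t → 0⁺`
  have hstep : ∀ t ∈ Set.Ioc (0 : ℝ) 1, 0 ≤ a + t * (1 / 2 * ‖x - z‖ ^ 2) := by
    rintro t ⟨ht0, ht1⟩
    have hconv := hf.2 (Set.mem_univ x) (Set.mem_univ z) (by linarith) ht0.le (sub_add_cancel 1 t)
    have hz := hmin ((1 - t) • x + t • z)
    rw [show (1 - t) • x + t • z - g = (x - g) - t • (x - z) by module, norm_sub_sq_real (x - g),
      norm_smul, inner_smul_right, Real.norm_eq_abs, abs_of_pos ht0] at hz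
    simp only [smul_eq_mul] at hconv
    refine nonneg_of_mul_nonneg_right ?_ ht0
    nlinarith
  have hlim : Filter.Tendsto (fun t => a + t * (1 / 2 * ‖x - z‖ ^ 2)) (nhdsWithin 0 (Set.Ioi 0))
      (nhds a) := by
    refine tendsto_nhdsWithin_of_tendsto_nhds ?_
    simpa using ((continuous_id.mul continuous_const).const_add a).tendsto (0 : ℝ)
  have := ge_of_tendsto hlim (Filter.eventually_of_mem (Ioc_mem_nhdsGT one_pos) hstep)
  linarith

open Matrix

section Frobenius

variable {d : ℕ}

def flattenEuclidean : Matrix (Fin d) (Fin d) ℝ ≃ₗ[ℝ] EuclideanSpace ℝ (Fin d × Fin d) :=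
  (LinearEquiv.curry ℝ ℝ (Fin d) (Fin d)).symm.trans (WithLp.linearEquiv 2 ℝ _).symm

@[simp]
lemma flattenEuclidean_apply (X : Matrix (Fin d) (Fin d) ℝ) (p : Fin d × Fin d) :
    flattenEuclidean X p = X p.1 p.2 := rfl

lemma inner_flattenEuclidean (X Y : Matrix (Fin d) (Fin d) ℝ) :
    inner ℝ (flattenEuclidean X) (flattenEuclidean Y) = fip X Y := by
  simp [PiLp.inner_apply, fip, Fintype.sum_prod_type, mul_comm]

lemma norm_flattenEuclidean (X : Matrix (Fin d) (Fin d) ℝ) : ‖flattenEuclidean X‖ = frob X := by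
  simp [EuclideanSpace.norm_eq, frob, Fintype.sum_prod_type]

lemma fip_eq_trace (X Y : Matrix (Fin d) (Fin d) ℝ) : fip X Y = trace (Xᵀ * Y) := by
  simp only [fip, trace, diag, mul_apply, transpose_apply]
  exact Finset.sum_comm

lemma fip_comm (X Y : Matrix (Fin d) (Fin d) ℝ) : fip X Y = fip Y X := by
  simp [fip, mul_comm]

lemma fip_add_right (X Y Z : Matrix (Fin d) (Fin d) ℝ) : fip X (Y + Z) = fip X Y + fip X Z := by
  simp [fip, mul_add, Finset.sum_add_distrib]

lemma fip_sub_right (X Y Z : Matrix (Fin d) (Fin d) ℝ) : fip X (Y - Z) = fip X Y - fip X Z := by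
  simp [fip, mul_sub, Finset.sum_sub_distrib]

lemma fip_smul_left (c : ℝ) (X Y : Matrix (Fin d) (Fin d) ℝ) : fip (c • X) Y = c * fip X Y := by
  simp [fip, Finset.mul_sum, mul_assoc]

lemma fip_smul_right (c : ℝ) (X Y : Matrix (Fin d) (Fin d) ℝ) : fip X (c • Y) = c * fip X Y := by
  simp [fip, Finset.mul_sum, mul_left_comm]

lemma fip_neg_left (X Y : Matrix (Fin d) (Fin d) ℝ) : fip (-X) Y = -fip X Y := by
  simp [fip]

lemma fip_zero_right (X : Matrix (Fin d) (Fin d) ℝ) : fip X 0 = 0 := by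
  simp [fip]

lemma fip_le_frob_mul_frob (X Y : Matrix (Fin d) (Fin d) ℝ) : fip X Y ≤ frob X * frob Y := by
  simpa only [inner_flattenEuclidean, norm_flattenEuclidean] using
    real_inner_le_norm (flattenEuclidean X) (flattenEuclidean Y)

lemma frob_sq (X : Matrix (Fin d) (Fin d) ℝ) : frob X ^ 2 = fip X X := by
  rw [← norm_flattenEuclidean, ← inner_flattenEuclidean, real_inner_self_eq_norm_sq]

lemma frob_nonneg (X : Matrix (Fin d) (Fin d) ℝ) : 0 ≤ frob X := Real.sqrt_nonneg _

lemma frob_zero : frob (0 : Matrix (Fin d) (Fin d) ℝ) = 0 := by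
  simp [frob]

lemma frob_pos {X : Matrix (Fin d) (Fin d) ℝ} (hX : X ≠ 0) : 0 < frob X := by
  rw [← norm_flattenEuclidean, norm_pos_iff]
  exact flattenEuclidean.map_ne_zero_iff.mpr hX

lemma frob_smul (c : ℝ) (X : Matrix (Fin d) (Fin d) ℝ) : frob (c • X) = |c| * frob X := by
  rw [← norm_flattenEuclidean, map_smul, norm_smul, Real.norm_eq_abs, norm_flattenEuclidean]

lemma frob_neg (X : Matrix (Fin d) (Fin d) ℝ) : frob (-X) = frob X := by
  rw [← norm_flattenEuclidean, map_neg, norm_neg, norm_flattenEuclidean]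

lemma isCompact_frobSphere : IsCompact (frobSphere d) := by
  have : frobSphere d = flattenEuclidean ⁻¹' Metric.sphere 0 1 := by
    ext X; simp [frobSphere, norm_flattenEuclidean]
  rw [this]
  exact (flattenEuclidean (d := d)).toContinuousLinearEquiv.toHomeomorph.isCompact_preimage.mpr
    (isCompact_sphere 0 1)

lemma fip_mul_orthogonal {V : Matrix (Fin d) (Fin d) ℝ} (hV : V * Vᵀ = 1)
    (X Y : Matrix (Fin d) (Fin d) ℝ) : fip (X * V) (Y * V) = fip X Y := by
  rw [fip_eq_trace, fip_eq_trace, transpose_mul, Matrix.mul_assoc, trace_mul_comm,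
    Matrix.mul_assoc, Matrix.mul_assoc, hV, Matrix.mul_one]

lemma fip_le_sum_sqrt_diag (X Y : Matrix (Fin d) (Fin d) ℝ) :
    fip X Y ≤ ∑ j, √((Xᵀ * X) j j) * √((Yᵀ * Y) j j) := by
  simp only [fip, mul_apply, transpose_apply, ← sq]
  rw [Finset.sum_comm]
  exact Finset.sum_le_sum fun j _ => Real.sum_mul_le_sqrt_mul_sqrt _ _ _

end Frobenius

noncomputable section PolarFactor

variable {d : ℕ} (X : Matrix (Fin d) (Fin d) ℝ)

def rightSingularMatrix : Matrix (Fin d) (Fin d) ℝ :=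
  (isHermitian_conjTranspose_mul_self X).eigenvectorUnitary

def singularValue (i : Fin d) : ℝ := √((isHermitian_conjTranspose_mul_self X).eigenvalues i)

lemma rightSingularMatrix_mul_transpose :
    rightSingularMatrix X * (rightSingularMatrix X)ᵀ = 1 :=
  Unitary.coe_mul_star_self (isHermitian_conjTranspose_mul_self X).eigenvectorUnitary

lemma transpose_mul_rightSingularMatrix :
    (rightSingularMatrix X)ᵀ * rightSingularMatrix X = 1 :=
  Unitary.coe_star_mul_self (isHermitian_conjTranspose_mul_self X).eigenvectorUnitary

lemma transpose_mul_self_eq :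
    Xᵀ * X = rightSingularMatrix X * diagonal (fun i => singularValue X i ^ 2) *
      (rightSingularMatrix X)ᵀ := by
  have hsq : (fun i => singularValue X i ^ 2) =
      RCLike.ofReal ∘ (isHermitian_conjTranspose_mul_self X).eigenvalues := by
    ext i
    exact Real.sq_sqrt (eigenvalues_conjTranspose_mul_self_nonneg X i)
  rw [← conjTranspose_eq_transpose_of_trivial X, hsq]
  exact (isHermitian_conjTranspose_mul_self X).spectral_theorem

lemma gram_mul_rightSingularMatrix :
    (X * rightSingularMatrix X)ᵀ * (X * rightSingularMatrix X) =
      diagonal fun i => singularValue X i ^ 2 := by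
  rw [transpose_mul, Matrix.mul_assoc, ← Matrix.mul_assoc Xᵀ, transpose_mul_self_eq]
  simp only [← Matrix.mul_assoc, transpose_mul_rightSingularMatrix, Matrix.one_mul]
  rw [Matrix.mul_assoc, transpose_mul_rightSingularMatrix, Matrix.mul_one]

lemma singularValue_nonneg (i : Fin d) : 0 ≤ singularValue X i := Real.sqrt_nonneg _

lemma rank_eq_sum_singularValue_mul_inv :
    (X.rank : ℝ) = ∑ i, singularValue X i * (singularValue X i)⁻¹ := by
  have hne (i : Fin d) : singularValue X i ≠ 0 ↔
      (isHermitian_conjTranspose_mul_self X).eigenvalues i ≠ 0 :=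
    (Real.sqrt_eq_zero (eigenvalues_conjTranspose_mul_self_nonneg X i)).not
  have hterm (i : Fin d) : singularValue X i * (singularValue X i)⁻¹ =
      if (isHermitian_conjTranspose_mul_self X).eigenvalues i ≠ 0 then 1 else 0 := by
    split_ifs with h
    · exact mul_inv_cancel₀ ((hne i).mpr h)
    · simp [not_not.mp ((hne i).not.mpr h)]
  rw [← rank_conjTranspose_mul_self,
    (isHermitian_conjTranspose_mul_self X).rank_eq_card_non_zero_eigs, Fintype.card_subtype,
    Finset.sum_congr rfl fun i _ => hterm i, Finset.sum_boole]

/-- The partial isometry `U Vᵀ` of a singular value decomposition `X = U Σ Vᵀ`. -/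
def polarFactor : Matrix (Fin d) (Fin d) ℝ :=
  X * rightSingularMatrix X * diagonal (fun i => (singularValue X i)⁻¹) * (rightSingularMatrix X)ᵀ

lemma polarFactor_mul_rightSingularMatrix :
    polarFactor X * rightSingularMatrix X =
      X * rightSingularMatrix X * diagonal (fun i => (singularValue X i)⁻¹) := by
  rw [polarFactor, Matrix.mul_assoc _ (rightSingularMatrix X)ᵀ, transpose_mul_rightSingularMatrix,
    Matrix.mul_one]

lemma transpose_polarFactor_mul_self :
    (polarFactor X)ᵀ * polarFactor X = rightSingularMatrix X *
      diagonal (fun i => singularValue X i * (singularValue X i)⁻¹) * (rightSingularMatrix X)ᵀ := by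
  have hdiag : (fun i => singularValue X i * (singularValue X i)⁻¹) =
      fun i => (singularValue X i)⁻¹ * (singularValue X i ^ 2 * (singularValue X i)⁻¹) := by
    ext i
    rcases eq_or_ne (singularValue X i) 0 with h | h
    · simp [h]
    · field_simp
  rw [hdiag, ← diagonal_mul_diagonal, ← diagonal_mul_diagonal, ← gram_mul_rightSingularMatrix]
  simp only [polarFactor, transpose_mul, transpose_transpose, diagonal_transpose, Matrix.mul_assoc]

lemma fip_polarFactor_self : fip (polarFactor X) X = nucNorm X := by
  rw [← fip_mul_orthogonal (rightSingularMatrix_mul_transpose X),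
    polarFactor_mul_rightSingularMatrix, fip_eq_trace, transpose_mul, diagonal_transpose,
    Matrix.mul_assoc, gram_mul_rightSingularMatrix, diagonal_mul_diagonal, trace_diagonal]
  exact Finset.sum_congr rfl fun i _ => by
    rw [sq, ← _root_.mul_assoc, inv_mul_mul_self]; rfl

lemma frob_polarFactor_sq : frob (polarFactor X) ^ 2 = X.rank := by
  rw [frob_sq, fip_eq_trace, transpose_polarFactor_mul_self, trace_mul_comm, ← Matrix.mul_assoc,
    transpose_mul_rightSingularMatrix, Matrix.one_mul, trace_diagonal,
    rank_eq_sum_singularValue_mul_inv]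

lemma diag_transpose_mul_diagonal_mul_le (Z : Matrix (Fin d) (Fin d) ℝ) {p : Fin d → ℝ}
    (hp : ∀ i, p i ≤ 1) (j : Fin d) : (Zᵀ * diagonal p * Z) j j ≤ (Zᵀ * Z) j j := by
  rw [mul_apply, mul_apply]
  simp only [mul_diagonal, transpose_apply]
  exact Finset.sum_le_sum fun i _ => by nlinarith [mul_self_nonneg (Z i j), hp i]

lemma fip_polarFactor_le (Y : Matrix (Fin d) (Fin d) ℝ) : fip (polarFactor X) Y ≤ nucNorm Y := by
  set V := rightSingularMatrix Y
  set Z := (rightSingularMatrix X)ᵀ * V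
  have hZ : Zᵀ * Z = 1 := by
    simp only [Z, transpose_mul, transpose_transpose, Matrix.mul_assoc]
    rw [← Matrix.mul_assoc (rightSingularMatrix X), rightSingularMatrix_mul_transpose,
      Matrix.one_mul, transpose_mul_rightSingularMatrix]
  have hcol (j : Fin d) : ((polarFactor X * V)ᵀ * (polarFactor X * V)) j j ≤ 1 := by
    have : (polarFactor X * V)ᵀ * (polarFactor X * V) =
        Zᵀ * diagonal (fun i => singularValue X i * (singularValue X i)⁻¹) * Z := by
      simp only [Z, transpose_mul, transpose_transpose, Matrix.mul_assoc]
      rw [← Matrix.mul_assoc (polarFactor X)ᵀ, transpose_polarFactor_mul_self]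
      simp only [Matrix.mul_assoc]
    rw [this]
    exact (diag_transpose_mul_diagonal_mul_le Z (fun _ => mul_inv_le_one) j).trans
      (by simp [hZ])
  -- columns of `W V` have norm at most one; those of `Y V` have norms `singularValue Y j`
  calc fip (polarFactor X) Y = fip (polarFactor X * V) (Y * V) :=
        (fip_mul_orthogonal (rightSingularMatrix_mul_transpose Y) _ _).symm
    _ ≤ ∑ j, √(((polarFactor X * V)ᵀ * (polarFactor X * V)) j j) * √(((Y * V)ᵀ * (Y * V)) j j) :=
        fip_le_sum_sqrt_diag _ _
    _ ≤ ∑ j, singularValue Y j := by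
        refine Finset.sum_le_sum fun j _ => ?_
        rw [gram_mul_rightSingularMatrix, diagonal_apply_eq,
          Real.sqrt_sq (singularValue_nonneg Y j)]
        exact mul_le_of_le_one_left (singularValue_nonneg Y j)
          (Real.sqrt_le_one.mpr (hcol j))
    _ = nucNorm Y := rfl

end PolarFactor

section NuclearNorm

variable {d : ℕ}

lemma nucNorm_convexOn : ConvexOn ℝ Set.univ (nucNorm : Matrix (Fin d) (Fin d) ℝ → ℝ) := by
  refine ⟨convex_univ, fun X _ Y _ a b ha hb _ => ?_⟩
  set W := polarFactor (a • X + b • Y)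
  calc nucNorm (a • X + b • Y) = fip W (a • X + b • Y) := (fip_polarFactor_self _).symm
    _ = a * fip W X + b * fip W Y := by rw [fip_add_right, fip_smul_right, fip_smul_right]
    _ ≤ a • nucNorm X + b • nucNorm Y := by
        simp only [smul_eq_mul]
        gcongr <;> exact fip_polarFactor_le _ _

lemma nucNorm_sub_nucNorm_le (X Y : Matrix (Fin d) (Fin d) ℝ) :
    nucNorm X - nucNorm Y ≤ √X.rank * frob (X - Y) :=
  calc nucNorm X - nucNorm Y ≤ fip (polarFactor X) X - fip (polarFactor X) Y := by
        linarith [fip_polarFactor_self X, fip_polarFactor_le X Y]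
    _ = fip (polarFactor X) (X - Y) := (fip_sub_right _ _ _).symm
    _ ≤ frob (polarFactor X) * frob (X - Y) := fip_le_frob_mul_frob _ _
    _ = √X.rank * frob (X - Y) := by
        rw [← frob_polarFactor_sq, Real.sqrt_sq (frob_nonneg _)]

end NuclearNorm

lemma fip_sub_le_of_forall_prox_le {d : ℕ} {f : Matrix (Fin d) (Fin d) ℝ → ℝ}
    (hf : ConvexOn ℝ Set.univ f) {X G : Matrix (Fin d) (Fin d) ℝ}
    (hmin : ∀ Z, f X + 1 / 2 * frob (X - G) ^ 2 ≤ f Z + 1 / 2 * frob (Z - G) ^ 2)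
    (Z : Matrix (Fin d) (Fin d) ℝ) : fip (X - G) (X - Z) ≤ f Z - f X := by
  have key := inner_sub_le_of_forall_prox_le
    (hf.comp_linearMap (flattenEuclidean (d := d)).symm.toLinearMap)
    (x := flattenEuclidean X) (g := flattenEuclidean G) (fun z => by
      obtain ⟨Z, rfl⟩ := flattenEuclidean.surjective z
      simpa [← map_sub, norm_flattenEuclidean] using hmin Z) (flattenEuclidean Z)
  simpa [← map_sub, inner_flattenEuclidean] using key

lemma fip_sub_le_of_prox_nucNorm {d r : ℕ} {c : ℝ} (hc : 0 ≤ c)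
    {X G Xstar : Matrix (Fin d) (Fin d) ℝ} (hXs : Xstar.rank ≤ r)
    (hmin : ∀ Z, c * nucNorm X + 1 / 2 * frob (X - G) ^ 2 ≤
      c * nucNorm Z + 1 / 2 * frob (Z - G) ^ 2) :
    fip (X - Xstar) (X - G) ≤ c * √r * frob (X - Xstar) :=
  calc fip (X - Xstar) (X - G) ≤ c * (nucNorm Xstar - nucNorm X) := by
        rw [fip_comm, mul_sub]
        exact fip_sub_le_of_forall_prox_le (nucNorm_convexOn.smul hc) hmin Xstar
    _ ≤ c * (√Xstar.rank * frob (Xstar - X)) := by gcongr; exact nucNorm_sub_nucNorm_le _ _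
    _ ≤ c * √r * frob (X - Xstar) := by
        rw [← neg_sub, frob_neg, mul_assoc]
        gcongr
        exact frob_nonneg _

section LowRank

variable {d : ℕ}

lemma rank_sub_le (X Y : Matrix (Fin d) (Fin d) ℝ) : (X - Y).rank ≤ X.rank + Y.rank := by
  have hrange : LinearMap.range (X - Y).mulVecLin ≤
      LinearMap.range X.mulVecLin ⊔ LinearMap.range Y.mulVecLin := by
    rintro _ ⟨v, rfl⟩
    rw [mulVecLin_apply, sub_mulVec]
    exact Submodule.sub_mem_sup (LinearMap.mem_range_self _ v) (LinearMap.mem_range_self _ v)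
  exact (Submodule.finrank_mono hrange).trans (Submodule.finrank_add_le_finrank_add_finrank _ _)

lemma sub_mem_lowRank {k l n : ℕ} {X Y : Matrix (Fin d) (Fin d) ℝ} (hX : X ∈ lowRank d k)
    (hY : Y ∈ lowRank d l) (hn : k + l ≤ n) : X - Y ∈ lowRank d n :=
  (rank_sub_le X Y).trans ((add_le_add hX hY).trans hn)

lemma smul_mem_lowRank {k : ℕ} {X : Matrix (Fin d) (Fin d) ℝ} (hX : X ∈ lowRank d k) (c : ℝ) :
    c • X ∈ lowRank d k :=
  le_trans (by simpa using rank_mul_le_right (c • (1 : Matrix (Fin d) (Fin d) ℝ)) X) hX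

lemma inv_frob_smul_mem {k : ℕ} {X : Matrix (Fin d) (Fin d) ℝ} (hX : X ∈ lowRank d k)
    (hX0 : X ≠ 0) : (frob X)⁻¹ • X ∈ lowRank d k ∩ frobSphere d := by
  refine ⟨smul_mem_lowRank hX _, ?_⟩
  rw [frobSphere, Set.mem_ofPred_eq, frob_smul, abs_inv, abs_of_pos (frob_pos hX0),
    inv_mul_cancel₀ (frob_pos hX0).ne']

end LowRank

section RestrictedSingularValues

variable {m d : ℕ} (A : Fin m → Matrix (Fin d) (Fin d) ℝ)

lemma opA_sub (X Y : Matrix (Fin d) (Fin d) ℝ) : opA A (X - Y) = opA A X - opA A Y := by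
  ext i; simp [opA, fip_sub_right]

lemma opA_smul (c : ℝ) (X : Matrix (Fin d) (Fin d) ℝ) : opA A (c • X) = c • opA A X := by
  ext i; simp [opA, fip_smul_right]

lemma opAT_sub (y z : Fin m → ℝ) : opAT A (y - z) = opAT A y - opAT A z := by
  simp [opAT, sub_smul, Finset.sum_sub_distrib]

lemma opAT_smul (c : ℝ) (y : Fin m → ℝ) : opAT A (c • y) = c • opAT A y := by
  simp [opAT, Finset.smul_sum, smul_smul]

lemma l2norm_nonneg (w : Fin m → ℝ) : 0 ≤ l2norm w := Real.sqrt_nonneg _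

lemma l2norm_pos {w : Fin m → ℝ} (hw : w ≠ 0) : 0 < l2norm w := by
  have : l2norm w = ‖(WithLp.toLp 2 w : EuclideanSpace ℝ (Fin m))‖ := by
    simp [l2norm, EuclideanSpace.norm_eq]
  rw [this, norm_pos_iff]
  exact fun h => hw (congrArg WithLp.ofLp h)

lemma neg_mem_lowRank_inter_frobSphere {k : ℕ} {V : Matrix (Fin d) (Fin d) ℝ}
    (hV : V ∈ lowRank d k ∩ frobSphere d) : -V ∈ lowRank d k ∩ frobSphere d := by
  refine ⟨by simpa using smul_mem_lowRank hV.1 (-1), ?_⟩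
  rw [frobSphere, Set.mem_ofPred_eq, frob_neg]
  exact hV.2

lemma bddAbove_rsRho_set (μ : ℝ) {P Q : Set (Matrix (Fin d) (Fin d) ℝ)} (hP : P ⊆ frobSphere d)
    (hQ : Q ⊆ frobSphere d) :
    BddAbove {t | ∃ V ∈ P, ∃ U ∈ Q, t = fip V (U - μ • opAT A (opA A U))} := by
  refine ((isCompact_frobSphere.prod isCompact_frobSphere).bddAbove_image
    (f := fun p => fip p.1 (p.2 - μ • opAT A (opA A p.2))) ?_).mono ?_
  · apply Continuous.continuousOn
    simp only [fip, opAT, opA]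
    fun_prop
  · rintro _ ⟨V, hV, U, hU, rfl⟩
    exact ⟨(V, U), ⟨hP hV, hQ hU⟩, rfl⟩

lemma rsRhoM_nonneg (μ : ℝ) (k : ℕ) (Q : Set (Matrix (Fin d) (Fin d) ℝ)) :
    0 ≤ rsRhoM A μ (lowRank d k ∩ frobSphere d) Q := by
  refine Real.sSup_nonneg_of_forall_neg_mem ?_
  rintro _ ⟨V, hV, U, hU, rfl⟩
  exact ⟨-V, neg_mem_lowRank_inter_frobSphere hV, U, hU, (fip_neg_left _ _).symm⟩

lemma rsRhoM_mono_left (μ : ℝ) {k l : ℕ} (hkl : k ≤ l) {Q : Set (Matrix (Fin d) (Fin d) ℝ)}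
    (hQ : Q ⊆ frobSphere d) :
    rsRhoM A μ (lowRank d k ∩ frobSphere d) Q ≤ rsRhoM A μ (lowRank d l ∩ frobSphere d) Q := by
  refine Real.sSup_le_sSup_of_subset (bddAbove_rsRho_set A μ Set.inter_subset_right hQ)
    (rsRhoM_nonneg A μ l Q) ?_
  rintro _ ⟨V, hV, U, hU, rfl⟩
  exact ⟨V, ⟨hV.1.trans hkl, hV.2⟩, U, hU, rfl⟩

lemma fip_le_rsRhoM_mul (μ : ℝ) {k l : ℕ} {V U : Matrix (Fin d) (Fin d) ℝ}
    (hV : V ∈ lowRank d k) (hU : U ∈ lowRank d l) :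
    fip V (U - μ • opAT A (opA A U)) ≤
      rsRhoM A μ (lowRank d k ∩ frobSphere d) (lowRank d l ∩ frobSphere d) * frob V * frob U := by
  rcases eq_or_ne V 0 with rfl | hV0
  · simp [fip, frob_zero]
  rcases eq_or_ne U 0 with rfl | hU0
  · simp [fip, opA, opAT, frob_zero]
  have hle : fip ((frob V)⁻¹ • V) ((frob U)⁻¹ • U - μ • opAT A (opA A ((frob U)⁻¹ • U))) ≤
      rsRhoM A μ (lowRank d k ∩ frobSphere d) (lowRank d l ∩ frobSphere d) :=
    le_csSup (bddAbove_rsRho_set A μ Set.inter_subset_right Set.inter_subset_right)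
      ⟨_, inv_frob_smul_mem hV hV0, _, inv_frob_smul_mem hU hU0, rfl⟩
  rw [opA_smul, opAT_smul, smul_comm μ, ← smul_sub, fip_smul_left, fip_smul_right,
    inv_mul_le_iff₀ (frob_pos hV0), inv_mul_le_iff₀ (frob_pos hU0)] at hle
  linarith

lemma bddAbove_rsXi_set (M : Matrix (Fin d) (Fin d) ℝ) {P : Set (Matrix (Fin d) (Fin d) ℝ)}
    (hP : P ⊆ frobSphere d) : BddAbove {t | ∃ V ∈ P, t = fip V M} := by
  refine ⟨frob M, ?_⟩
  rintro _ ⟨V, hV, rfl⟩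
  have h := fip_le_frob_mul_frob V M
  rwa [show frob V = 1 from hP hV, one_mul] at h

lemma rsXiM_nonneg (w : Fin m → ℝ) (k : ℕ) : 0 ≤ rsXiM A w (lowRank d k ∩ frobSphere d) := by
  refine Real.sSup_nonneg_of_forall_neg_mem ?_
  rintro _ ⟨V, hV, rfl⟩
  exact ⟨-V, neg_mem_lowRank_inter_frobSphere hV, (fip_neg_left _ _).symm⟩

lemma rsXiM_mono (w : Fin m → ℝ) {k l : ℕ} (hkl : k ≤ l) :
    rsXiM A w (lowRank d k ∩ frobSphere d) ≤ rsXiM A w (lowRank d l ∩ frobSphere d) := by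
  refine Real.sSup_le_sSup_of_subset (bddAbove_rsXi_set _ Set.inter_subset_right)
    (rsXiM_nonneg A w l) ?_
  rintro _ ⟨V, hV, rfl⟩
  exact ⟨V, ⟨hV.1.trans hkl, hV.2⟩, rfl⟩

lemma fip_opAT_le_rsXiM_mul (w : Fin m → ℝ) {k : ℕ} {V : Matrix (Fin d) (Fin d) ℝ}
    (hV : V ∈ lowRank d k) :
    fip V (opAT A w) ≤ rsXiM A w (lowRank d k ∩ frobSphere d) * frob V * l2norm w := by
  rcases eq_or_ne V 0 with rfl | hV0
  · simp [fip, frob_zero]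
  rcases eq_or_ne w 0 with rfl | hw0
  · rw [show opAT A 0 = 0 by simp [opAT], fip_zero_right,
      show l2norm (0 : Fin m → ℝ) = 0 by simp [l2norm], mul_zero]
  have hle : fip ((frob V)⁻¹ • V) (opAT A ((l2norm w)⁻¹ • w)) ≤
      rsXiM A w (lowRank d k ∩ frobSphere d) :=
    le_csSup (bddAbove_rsXi_set _ Set.inter_subset_right) ⟨_, inv_frob_smul_mem hV hV0, rfl⟩
  rw [opAT_smul, fip_smul_left, fip_smul_right, inv_mul_le_iff₀ (frob_pos hV0),
    inv_mul_le_iff₀ (l2norm_pos hw0)] at hle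
  linarith

end RestrictedSingularValues

lemma fip_gradient_step_error_le {m d k : ℕ} (A : Fin m → Matrix (Fin d) (Fin d) ℝ) (w : Fin m → ℝ)
    {μ Δ δ : ℝ} (hμ : 0 ≤ μ) {E Xt Xstar : Matrix (Fin d) (Fin d) ℝ} (hE : E ∈ lowRank d k)
    (hD : Xt - Xstar ∈ lowRank d k) (hΔ : frob (Xt - Xstar) ≤ Δ) (hw : l2norm w ≤ δ) :
    fip E (Xt - μ • opAT A (opA A Xt - (opA A Xstar + w)) - Xstar) ≤
      (rsRhoM A μ (lowRank d k ∩ frobSphere d) (lowRank d k ∩ frobSphere d) * Δ +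
        rsXiM A w (lowRank d k ∩ frobSphere d) * μ * δ) * frob E := by
  have hsplit : Xt - μ • opAT A (opA A Xt - (opA A Xstar + w)) - Xstar =
      (Xt - Xstar - μ • opAT A (opA A (Xt - Xstar))) + μ • opAT A w := by
    rw [opA_sub, show opA A Xt - (opA A Xstar + w) = opA A Xt - opA A Xstar - w by abel,
      opAT_sub, smul_sub]
    abel
  rw [hsplit, fip_add_right, fip_smul_right]
  have hρ := fip_le_rsRhoM_mul A μ hE hD
  have hξ := fip_opAT_le_rsXiM_mul A w hE
  have hρ0 := rsRhoM_nonneg A μ k (lowRank d k ∩ frobSphere d)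
  have hξ0 := rsXiM_nonneg A w k (d := d)
  have hE0 := frob_nonneg E
  have hw0 := l2norm_nonneg w
  nlinarith [mul_le_mul_of_nonneg_left hΔ (mul_nonneg hρ0 hE0),
    mul_le_mul_of_nonneg_left hw (mul_nonneg hμ (mul_nonneg hξ0 hE0))]

/-- One-step deterministic contraction, low-rank case.
If `rank(X_t) < 2r`, `rank(X_{t+1}) < 2r`, `‖X_t - X⋆‖_F ≤ Δ_t`, and
`λ_t = (ξ_r δ + ρ_{r,3r} Δ_t/μ)/√r`, then
`‖X_{t+1} - X⋆‖_F ≤ 2 ρ_{3r,3r} Δ_t + 2 ξ_{3r} μ δ`. -/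
theorem stmt5 {m d : ℕ} (A : Fin m → Matrix (Fin d) (Fin d) ℝ) (w : Fin m → ℝ) (δ : ℝ)
    (Xstar : Matrix (Fin d) (Fin d) ℝ) (r : ℕ) (μ Δt lamt : ℝ)
    (Xt Xnext : Matrix (Fin d) (Fin d) ℝ)
    (y : Fin m → ℝ) (hy : y = opA A Xstar + w)
    (hXs : Xstar.rank ≤ r) (hw : l2norm w ≤ δ) (hμ : 0 < μ)
    (hrankt : Xt.rank < 2 * r)
    (hrankt1 : Xnext.rank < 2 * r)
    (hΔ : frob (Xt - Xstar) ≤ Δt)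
    (hlam : lamt = (rsXiM A w (lowRank d r ∩ frobSphere d) * δ +
        rsRhoM A μ (lowRank d r ∩ frobSphere d) (lowRank d (3 * r) ∩ frobSphere d) * Δt / μ)
        / Real.sqrt r)
    (hmin : ∀ Z : Matrix (Fin d) (Fin d) ℝ,
        lamt * μ * nucNorm Xnext + (1 / 2) * frob (Xnext - (Xt - μ • opAT A (opA A Xt - y))) ^ 2 ≤
        lamt * μ * nucNorm Z + (1 / 2) * frob (Z - (Xt - μ • opAT A (opA A Xt - y))) ^ 2) :
    frob (Xnext - Xstar) ≤
      2 * rsRhoM A μ (lowRank d (3 * r) ∩ frobSphere d) (lowRank d (3 * r) ∩ frobSphere d) * Δt +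
      2 * rsXiM A w (lowRank d (3 * r) ∩ frobSphere d) * μ * δ := by
  subst hy
  set G := Xt - μ • opAT A (opA A Xt - (opA A Xstar + w))
  set E := Xnext - Xstar
  set ρ₁ := rsRhoM A μ (lowRank d r ∩ frobSphere d) (lowRank d (3 * r) ∩ frobSphere d)
  set ρ₃ := rsRhoM A μ (lowRank d (3 * r) ∩ frobSphere d) (lowRank d (3 * r) ∩ frobSphere d)
  set ξ₁ := rsXiM A w (lowRank d r ∩ frobSphere d)
  set ξ₃ := rsXiM A w (lowRank d (3 * r) ∩ frobSphere d)
  have hr : (0 : ℝ) < r := by exact_mod_cast (show 0 < r by omega)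
  have hδ : 0 ≤ δ := (l2norm_nonneg w).trans hw
  have hΔt : 0 ≤ Δt := (frob_nonneg _).trans hΔ
  have hξ₁ : 0 ≤ ξ₁ := rsXiM_nonneg A w r
  have hρ₁ : 0 ≤ ρ₁ := rsRhoM_nonneg A μ r _
  have hlam_r : lamt * μ * √r = ξ₁ * μ * δ + ρ₁ * Δt := by rw [hlam]; field_simp
  have hprox : fip E (Xnext - G) ≤ (ξ₁ * μ * δ + ρ₁ * Δt) * frob E := by
    rw [← hlam_r]
    exact fip_sub_le_of_prox_nucNorm (by rw [hlam]; positivity) hXs hmin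
  have hgrad : fip E (G - Xstar) ≤ (ρ₃ * Δt + ξ₃ * μ * δ) * frob E :=
    fip_gradient_step_error_le A w hμ.le (sub_mem_lowRank hrankt1.le hXs (by omega))
      (sub_mem_lowRank hrankt.le hXs (by omega)) hΔ hw
  have hsq : frob E ^ 2 = fip E (Xnext - G) + fip E (G - Xstar) := by
    rw [frob_sq, ← fip_add_right, sub_add_sub_cancel]
  have hρ : ρ₁ ≤ ρ₃ := rsRhoM_mono_left A μ (by omega) Set.inter_subset_right
  have hξ : ξ₁ ≤ ξ₃ := rsXiM_mono A w (by omega)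
  have hρ₃ : 0 ≤ ρ₃ := rsRhoM_nonneg A μ _ _
  have hξ₃ : 0 ≤ ξ₃ := rsXiM_nonneg A w _
  nlinarith [frob_nonneg E, mul_le_mul_of_nonneg_right hρ hΔt,
    mul_le_mul_of_nonneg_right hξ (mul_nonneg hμ.le hδ), mul_nonneg hρ₃ hΔt,
    mul_nonneg (mul_nonneg hξ₃ hμ.le) hδ]
end

section
/- Let A ∈ ℝ^{m×n}, let P, Q ⊆ S^{n−1}, and let E ≥ 0 with √m ≥ E. Suppose that for all u ∈ P and v ∈ Q: ‖A(u+v)‖₂/√m ≥ max{‖u+v‖₂ − E/√m, 0} and ‖A(u−v)‖₂/√m ≤ ‖u−v‖₂ + E/√m. Then sup_{u∈P, v∈Q} ⟨v, (I − AᵀA/m) u⟩ ≤ (3/2) · E / √m. -/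
noncomputable section

/-- Euclidean dot product on `Fin n → ℝ`. -/
def dotp {n : ℕ} (x y : Fin n → ℝ) : ℝ := ∑ i, x i * y i

/-- The Euclidean unit sphere `S^{n-1}`. -/
def unitSphere (n : ℕ) : Set (Fin n → ℝ) := {x | l2norm x = 1}

/-- Matrix-vector product, viewing `A : Fin m → Fin n → ℝ` as the rows of a matrix. -/
def mvec {m n : ℕ} (A : Fin m → Fin n → ℝ) (x : Fin n → ℝ) : Fin m → ℝ := fun i => dotp (A i) x

/-- Transposed matrix-vector product `Aᵀ y`. -/
def tmvec {m n : ℕ} (A : Fin m → Fin n → ℝ) (y : Fin m → ℝ) : Fin n → ℝ := fun j => ∑ i, A i j * y i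

end

lemma l2norm_nonneg_s7 {n : ℕ} (x : Fin n → ℝ) : 0 ≤ l2norm x := Real.sqrt_nonneg _

lemma l2norm_sq {n : ℕ} (x : Fin n → ℝ) : l2norm x ^ 2 = ∑ i, x i ^ 2 := by
  apply Real.sq_sqrt
  exact Finset.sum_nonneg fun i _ => sq_nonneg _

/-- polarization -/
lemma pol_aux {k : ℕ} (x y : Fin k → ℝ) :
    (∑ i, (x i + y i) ^ 2) - (∑ i, (x i - y i) ^ 2) = 4 * ∑ i, x i * y i := by
  rw [← Finset.sum_sub_distrib, Finset.mul_sum]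
  exact Finset.sum_congr rfl fun i _ => by ring

lemma mvec_add {m n : ℕ} (A : Fin m → Fin n → ℝ) (u v : Fin n → ℝ) (i : Fin m) :
    mvec A (u + v) i = mvec A u i + mvec A v i := by
  simp only [mvec, dotp, ← Finset.sum_add_distrib]
  exact Finset.sum_congr rfl fun j _ => by simp [mul_add]

lemma mvec_sub {m n : ℕ} (A : Fin m → Fin n → ℝ) (u v : Fin n → ℝ) (i : Fin m) :
    mvec A (u - v) i = mvec A u i - mvec A v i := by
  simp only [mvec, dotp, ← Finset.sum_sub_distrib]
  exact Finset.sum_congr rfl fun j _ => by simp [mul_sub]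

lemma dotp_tmvec {m n : ℕ} (A : Fin m → Fin n → ℝ) (v : Fin n → ℝ) (y : Fin m → ℝ) :
    dotp v (tmvec A y) = ∑ i, y i * mvec A v i := by
  simp only [dotp, tmvec, mvec, Finset.mul_sum]
  rw [Finset.sum_comm]
  exact Finset.sum_congr rfl fun i _ => Finset.sum_congr rfl fun j _ => by ring

/-- The key algebraic identity expressing `⟨v, (I - AᵀA/m) u⟩` via polarization. -/
lemma key_identity {m n : ℕ} (A : Fin m → Fin n → ℝ) (u v : Fin n → ℝ) :
    dotp v (u - (m : ℝ)⁻¹ • tmvec A (mvec A u)) =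
      (l2norm (u + v) ^ 2 - l2norm (u - v) ^ 2) / 4 -
        (m : ℝ)⁻¹ * (l2norm (mvec A (u + v)) ^ 2 - l2norm (mvec A (u - v)) ^ 2) / 4 := by
  have hsw := dotp_tmvec A v (mvec A u)
  have h1 : dotp v (u - (m : ℝ)⁻¹ • tmvec A (mvec A u)) =
      (∑ i, u i * v i) - (m : ℝ)⁻¹ * ∑ i, mvec A u i * mvec A v i := by
    simp only [dotp, Pi.sub_apply, Pi.smul_apply, smul_eq_mul] at hsw ⊢
    calc ∑ x, v x * (u x - (m : ℝ)⁻¹ * tmvec A (mvec A u) x)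
        = ∑ x, (u x * v x - (m : ℝ)⁻¹ * (v x * tmvec A (mvec A u) x)) :=
          Finset.sum_congr rfl fun i _ => by ring
      _ = (∑ i, u i * v i) - (m : ℝ)⁻¹ * ∑ x, v x * tmvec A (mvec A u) x := by
          rw [Finset.sum_sub_distrib, ← Finset.mul_sum]
      _ = _ := by rw [hsw]
  rw [h1, l2norm_sq, l2norm_sq, l2norm_sq, l2norm_sq]
  have h2 : (∑ i, ((u + v) i) ^ 2) - (∑ i, ((u - v) i) ^ 2) = 4 * ∑ i, u i * v i := by
    have := pol_aux u v
    simpa using this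
  have h3 : (∑ i, mvec A (u + v) i ^ 2) - (∑ i, mvec A (u - v) i ^ 2)
      = 4 * ∑ i, mvec A u i * mvec A v i := by
    rw [← pol_aux (mvec A u) (mvec A v)]
    congr 1
    · exact Finset.sum_congr rfl fun i _ => by rw [mvec_add]
    · exact Finset.sum_congr rfl fun i _ => by rw [mvec_sub]
  rw [h2, h3]
  ring

/-- The core scalar inequality. -/
lemma core_bound (a b ε : ℝ) (ha0 : 0 ≤ a) (hb0 : 0 ≤ b) (hε0 : 0 ≤ ε) (hε1 : ε ≤ 1)
    (hpar : a ^ 2 + b ^ 2 = 4) :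
    a ^ 2 - (max (a - ε) 0) ^ 2 + 2 * b * ε + ε ^ 2 ≤ 6 * ε := by
  rcases le_or_gt ε a with hc | hc
  · rw [max_eq_left (by linarith)]
    have hab3 : a + b ≤ 3 := by nlinarith [sq_nonneg (a - b), sq_nonneg (a + b - 3)]
    nlinarith [mul_le_mul_of_nonneg_right hab3 hε0]
  · rw [max_eq_right (by linarith)]
    have hb2 : b ≤ 2 := by nlinarith
    nlinarith [mul_le_mul_of_nonneg_right hb2 hε0, mul_le_mul_of_nonneg_left hε1 hε0,
      mul_le_mul_of_nonneg_right (le_of_lt hc) ha0]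

/-- if `√m ≥ E ≥ 0` and for all `u ∈ P ⊆ S^{n-1}`, `v ∈ Q ⊆ S^{n-1}` we have
`‖A(u+v)‖₂/√m ≥ max{‖u+v‖₂ - E/√m, 0}` and `‖A(u-v)‖₂/√m ≤ ‖u-v‖₂ + E/√m`, then
`sup_{u∈P, v∈Q} ⟨v, (I - AᵀA/m) u⟩ ≤ (3/2) E/√m`. -/
theorem stmt7 {m n : ℕ} (A : Fin m → Fin n → ℝ) (P Q : Set (Fin n → ℝ)) (E : ℝ)
    (hP : P ⊆ unitSphere n) (hQ : Q ⊆ unitSphere n)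
    (hE : 0 ≤ E) (hm : E ≤ Real.sqrt m)
    (hlow : ∀ u ∈ P, ∀ v ∈ Q,
      max (l2norm (u + v) - E / Real.sqrt m) 0 ≤ l2norm (mvec A (u + v)) / Real.sqrt m)
    (hup : ∀ u ∈ P, ∀ v ∈ Q,
      l2norm (mvec A (u - v)) / Real.sqrt m ≤ l2norm (u - v) + E / Real.sqrt m) :
    sSup {t | ∃ u ∈ P, ∃ v ∈ Q, t = dotp v (u - (m : ℝ)⁻¹ • tmvec A (mvec A u))} ≤
      3 / 2 * E / Real.sqrt m := by
  have hs0 : 0 ≤ Real.sqrt m := Real.sqrt_nonneg _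
  apply Real.sSup_le
  · rintro t ⟨u, hu, v, hv, rfl⟩
    rw [key_identity]
    set a := l2norm (u + v) with ha_def
    set b := l2norm (u - v) with hb_def
    set Np := l2norm (mvec A (u + v)) with hNp_def
    set Nq := l2norm (mvec A (u - v)) with hNq_def
    have ha0 : 0 ≤ a := l2norm_nonneg_s7 _
    have hb0 : 0 ≤ b := l2norm_nonneg_s7 _
    have hNp0 : 0 ≤ Np := l2norm_nonneg_s7 _
    have hNq0 : 0 ≤ Nq := l2norm_nonneg_s7 _
    -- unit vectors
    have hu1 : ∑ i, u i ^ 2 = 1 := by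
      have h1 := hP hu
      simp only [unitSphere, Set.mem_setOf_eq] at h1
      have h := l2norm_sq u
      rw [h1] at h; linarith [h]
    have hv1 : ∑ i, v i ^ 2 = 1 := by
      have h1 := hQ hv
      simp only [unitSphere, Set.mem_setOf_eq] at h1
      have h := l2norm_sq v
      rw [h1] at h; linarith [h]
    -- parallelogram: a² + b² = 4
    have hpar : a ^ 2 + b ^ 2 = 4 := by
      rw [ha_def, hb_def, l2norm_sq, l2norm_sq]
      have hsum : (∑ i, ((u + v) i) ^ 2) + (∑ i, ((u - v) i) ^ 2)
          = ∑ i, (2 * u i ^ 2 + 2 * v i ^ 2) := by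
        rw [← Finset.sum_add_distrib]
        exact Finset.sum_congr rfl fun i _ => by
          simp only [Pi.add_apply, Pi.sub_apply]; ring
      have hsum2 : (∑ i, (2 * u i ^ 2 + 2 * v i ^ 2))
          = 2 * (∑ i, u i ^ 2) + 2 * (∑ i, v i ^ 2) := by
        rw [Finset.sum_add_distrib, ← Finset.mul_sum, ← Finset.mul_sum]
      rw [hu1, hv1] at hsum2
      linarith [hsum, hsum2]
    rcases Nat.eq_zero_or_pos m with hm0 | hmpos
    · -- degenerate case m = 0
      subst hm0
      have h := hlow u hu v hv
      rw [Nat.cast_zero, Real.sqrt_zero, div_zero, div_zero, sub_zero] at h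
      rw [← ha_def] at h
      have haz : a = 0 := le_antisymm (le_trans (le_max_left a 0) h) ha0
      rw [Nat.cast_zero, Real.sqrt_zero, inv_zero, zero_mul, zero_div, sub_zero, div_zero, haz]
      nlinarith [sq_nonneg b]
    · -- main case m ≥ 1
      have hscast : (0 : ℝ) < (m : ℝ) := by exact_mod_cast hmpos
      have hs : 0 < Real.sqrt m := Real.sqrt_pos.mpr hscast
      have hs2 : Real.sqrt m ^ 2 = (m : ℝ) := Real.sq_sqrt (le_of_lt hscast)
      set ε := E / Real.sqrt m with hε_def
      have hε0 : 0 ≤ ε := div_nonneg hE hs0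
      have hε1 : ε ≤ 1 := by
        rw [hε_def, div_le_one hs]; exact hm
      have hgoal_rhs : 3 / 2 * E / Real.sqrt m = 3 / 2 * ε := by
        rw [hε_def]; ring
      rw [hgoal_rhs]
      have hM0 : (0 : ℝ) ≤ max (a - ε) 0 := le_max_right _ _
      have h1 : max (a - ε) 0 ≤ Np / Real.sqrt m := hlow u hu v hv
      have h2 : Nq / Real.sqrt m ≤ b + ε := hup u hu v hv
      have h1' : (max (a - ε) 0) ^ 2 ≤ (m : ℝ)⁻¹ * Np ^ 2 := by
        have := pow_le_pow_left₀ hM0 h1 2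
        rwa [div_pow, hs2, div_eq_inv_mul] at this
      have h2' : (m : ℝ)⁻¹ * Nq ^ 2 ≤ (b + ε) ^ 2 := by
        have hq : 0 ≤ Nq / Real.sqrt m := div_nonneg hNq0 hs0
        have := pow_le_pow_left₀ hq h2 2
        rwa [div_pow, hs2, div_eq_inv_mul] at this
      have hmain := core_bound a b ε ha0 hb0 hε0 hε1 hpar
      have hexp : (m : ℝ)⁻¹ * (Np ^ 2 - Nq ^ 2)
          = (m : ℝ)⁻¹ * Np ^ 2 - (m : ℝ)⁻¹ * Nq ^ 2 := by ring
      have hbε : (b + ε) ^ 2 = b ^ 2 + 2 * b * ε + ε ^ 2 := by ring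
      linarith
  · apply div_nonneg _ hs0
    linarith
end
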